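/- arXiv:2204.09968 — 3 statements merged into one kernel-verified Lean document; each statement's English description precedes it below -/
import Mathlib

section
/- For every n ≥ 0, the function φ_n^{(θ)}(x) = (N/√(2ⁿ n!)) H_n(e^{iθ/2} √Ω x) exp(-(1/2) Ω e^{iθ} x²) is an eigenfunction of the differential operator H_θ f = (1/2)(-f'' + e^{2iθ} Ω² x² f) with eigenvalue E_n^{(θ)} = Ω e^{iθ}(n + 1/2). -/
open MeasureTheory Complex Filter Polynomial

noncomputable section

/-- The pseudo-bosonic annihilation operator `A_θ`. -/
def Aop (Ω θ : ℝ) (f : ℝ → ℂ) : ℝ → ℂ := fun x =>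
  ((Real.sqrt (2 * Ω))⁻¹ : ℂ) *
    (Complex.exp (Complex.I * θ / 2) * Ω * x * f x
      + Complex.exp (-(Complex.I * θ / 2)) * deriv f x)

/-- The pseudo-bosonic creation operator `B_θ`. -/
def Bop (Ω θ : ℝ) (f : ℝ → ℂ) : ℝ → ℂ := fun x =>
  ((Real.sqrt (2 * Ω))⁻¹ : ℂ) *
    (Complex.exp (Complex.I * θ / 2) * Ω * x * f x
      - Complex.exp (-(Complex.I * θ / 2)) * deriv f x)

/-- Physicists' Hermite polynomials, via `H_{n+1}(y) = 2y H_n(y) - H_n'(y)`. -/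
def physHermite : ℕ → Polynomial ℤ
  | 0 => 1
  | n + 1 => 2 * Polynomial.X * physHermite n - Polynomial.derivative (physHermite n)

lemma hermQ (n : ℕ) :
    derivative (physHermite (n + 1)) = 2 * (n + 1 : ℤ[X]) * physHermite n := by
  induction n with
  | zero => simp [physHermite]
  | succ n ih =>
    have hdef : physHermite (n + 2)
        = 2 * Polynomial.X * physHermite (n+1) - derivative (physHermite (n+1)) := rfl
    rw [hdef, derivative_sub, derivative_mul, ih, derivative_mul]
    have hdef1 : physHermite (n + 1)
        = 2 * Polynomial.X * physHermite n - derivative (physHermite n) := rfl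
    rw [hdef1]
    push_cast
    ring_nf
    simp [derivative_mul]
    ring

lemma hermODE (n : ℕ) :
    derivative (derivative (physHermite n))
      = 2 * Polynomial.X * derivative (physHermite n) - 2 * (n : ℤ[X]) * physHermite n := by
  have h1 : derivative (physHermite n) = 2 * Polynomial.X * physHermite n - physHermite (n+1) := by
    have : physHermite (n+1) = 2 * Polynomial.X * physHermite n - derivative (physHermite n) := rfl
    rw [this]; ring
  rw [h1, derivative_sub, derivative_mul, derivative_mul, hermQ n, h1]
  simp only [derivative_X, Polynomial.derivative_ofNat, mul_one]
  push_cast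
  ring

def Gc (a : ℂ) (P : ℤ[X]) : ℂ → ℂ := fun z =>
  Polynomial.aeval (a * z) P * Complex.exp (-(a ^ 2 / 2) * z ^ 2)

lemma hasDerivAt_Gc (a : ℂ) (P : ℤ[X]) (z : ℂ) :
    HasDerivAt (Gc a P) (a * Gc a (derivative P) z - a ^ 2 * z * Gc a P z) z := by
  have h1 : HasDerivAt (fun w : ℂ => (Polynomial.aeval (a * w) P : ℂ))
      (a * Polynomial.aeval (a * z) (derivative P)) z := by
    have := (P.hasDerivAt_aeval (a * z)).comp z ((hasDerivAt_id z).const_mul a)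
    simp only [mul_one] at this
    exact this.congr_deriv (by ring)
  have hz : HasDerivAt (fun w : ℂ => -(a ^ 2 / 2) * w ^ 2) (-(a ^ 2) * z) z := by
    have := (hasDerivAt_pow 2 z).const_mul (-(a ^ 2 / 2))
    exact this.congr_deriv (by ring)
  have h2 := hz.cexp
  have := h1.mul h2
  refine this.congr_deriv ?_
  unfold Gc
  ring

lemma Gc_ODE (a : ℂ) (n : ℕ) (z : ℂ) :
    Gc a (derivative (derivative (physHermite n))) z
      = 2 * a * z * Gc a (derivative (physHermite n)) z
        - 2 * n * Gc a (physHermite n) z := by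
  unfold Gc
  rw [hermODE n]
  simp only [map_sub, map_mul, Polynomial.aeval_X, map_ofNat, map_natCast]
  ring

lemma deriv_one_Gc (a c : ℂ) (P : ℤ[X]) :
    deriv (fun t : ℝ => c * Gc a P t)
      = fun x : ℝ => c * (a * Gc a (derivative P) x - a ^ 2 * x * Gc a P x) := by
  funext x
  exact (((hasDerivAt_Gc a P (x : ℂ)).const_mul c).comp_ofReal).deriv

lemma deriv_two (a c : ℂ) (P : ℤ[X]) (x : ℝ) :
    deriv (fun t : ℝ => c * (a * Gc a (derivative P) t - a ^ 2 * t * Gc a P t)) x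
      = c * (a * (a * Gc a (derivative (derivative P)) x
            - a ^ 2 * x * Gc a (derivative P) x)
          - a ^ 2 * (Gc a P x + x * (a * Gc a (derivative P) x - a ^ 2 * x * Gc a P x))) := by
  have h1 : HasDerivAt (fun w : ℂ => c * (a * Gc a (derivative P) w - a ^ 2 * w * Gc a P w))
      (c * (a * (a * Gc a (derivative (derivative P)) x
            - a ^ 2 * x * Gc a (derivative P) x)
          - a ^ 2 * (Gc a P x + x * (a * Gc a (derivative P) x - a ^ 2 * x * Gc a P x)))) x := by
    have hA := (hasDerivAt_Gc a (derivative P) (x : ℂ)).const_mul a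
    have hB := ((hasDerivAt_id (x : ℂ)).mul (hasDerivAt_Gc a P (x : ℂ))).const_mul (a ^ 2)
    have := (hA.sub hB).const_mul c
    refine HasDerivAt.congr_deriv (this.congr_of_eventuallyEq (Filter.Eventually.of_forall fun y => ?_)) ?_
    · simp only [id, Pi.sub_apply, Pi.mul_apply]
      ring
    · simp only [id, one_mul]
  exact h1.comp_ofReal.deriv

/-- The eigenfunctions `φ_n^{(θ)}` (with a general normalization constant `N`). -/
def phiN (Ω θ : ℝ) (N : ℂ) (n : ℕ) : ℝ → ℂ := fun x =>
  N / Real.sqrt (2 ^ n * n.factorial) *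
    Polynomial.aeval (Complex.exp (Complex.I * θ / 2) * Real.sqrt Ω * x) (physHermite n) *
    Complex.exp (-(1/2) * Ω * Complex.exp (Complex.I * θ) * x ^ 2)

/-- The Swanson-like Hamiltonian `H_θ f = (1/2)(-f'' + e^{2iθ} Ω² x² f)`. -/
def Hop (Ω θ : ℝ) (f : ℝ → ℂ) : ℝ → ℂ := fun x =>
  (1/2 : ℂ) * (-(deriv (deriv f) x) + Complex.exp (2 * Complex.I * θ) * Ω ^ 2 * x ^ 2 * f x)

/-- `φ_n^{(θ)}` is an eigenfunction of `H_θ` with eigenvalue `Ω e^{iθ}(n + 1/2)`. -/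
theorem stmt5 (Ω θ : ℝ) (hΩ : 0 < Ω) (N : ℂ) (hN : N ≠ 0) (n : ℕ) (x : ℝ) :
    Hop Ω θ (phiN Ω θ N n) x
      = (Ω : ℂ) * Complex.exp (Complex.I * θ) * (n + 1/2) * phiN Ω θ N n x := by
  set a : ℂ := Complex.exp (Complex.I * θ / 2) * (Real.sqrt Ω : ℂ) with ha
  set c : ℂ := N / (Real.sqrt (2 ^ n * n.factorial) : ℂ) with hc
  have ha2 : a ^ 2 = (Ω : ℂ) * Complex.exp (Complex.I * θ) := by
    have h1 : ((Real.sqrt Ω : ℝ) : ℂ) ^ 2 = (Ω : ℂ) := by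
      norm_cast
      exact Real.sq_sqrt hΩ.le
    have h2 : Complex.exp (Complex.I * θ / 2) ^ 2 = Complex.exp (Complex.I * θ) := by
      rw [← Complex.exp_nat_mul]
      norm_num
      ring_nf
    rw [ha, mul_pow, h1, h2]
    ring
  have ha4 : Complex.exp (2 * Complex.I * θ) * (Ω : ℂ) ^ 2 = a ^ 4 := by
    have h4 : a ^ 4 = (a ^ 2) ^ 2 := by ring
    have h2 : Complex.exp (Complex.I * θ) ^ 2 = Complex.exp (2 * Complex.I * θ) := by
      rw [← Complex.exp_nat_mul]
      norm_num
      ring_nf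
    rw [h4, ha2, mul_pow, h2]
    ring
  have hphi : phiN Ω θ N n = fun t : ℝ => c * Gc a (physHermite n) t := by
    funext t
    unfold phiN Gc
    have hexp : (-(1/2 : ℂ) * Ω * Complex.exp (Complex.I * θ) * (t : ℂ) ^ 2)
        = -(a ^ 2 / 2) * (t : ℂ) ^ 2 := by
      rw [ha2]; ring
    rw [hexp, hc, mul_assoc]
  rw [hphi]
  unfold Hop
  rw [deriv_one_Gc a c (physHermite n), deriv_two a c (physHermite n) x, Gc_ODE, ha4, ← ha2]
  ring
end
end

section
/- For θ with |θ| < π/2 and all n, m ≥ 0, the biorthonormality relation ∫_ℝ conj(φ_n^{(θ)}(x)) ψ_m^{(θ)}(x) dx = δ_{n,m} holds, where φ_n^{(θ)}(x) = (N^{(θ)}/√(2ⁿ n!)) H_n(e^{iθ/2} √Ω x) e^{-(1/2)Ω e^{iθ} x²}, ψ_m^{(θ)}(x) = φ_m^{(-θ)}(x), and N^{(θ)} = (Ω/π)^{1/4} e^{iθ/4}. -/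
open MeasureTheory Complex Filter

noncomputable section

private lemma physHermite_succ (n : ℕ) : physHermite (n + 1)
    = 2 * Polynomial.X * physHermite n - Polynomial.derivative (physHermite n) := rfl

private lemma physHermite_zero : physHermite 0 = 1 := rfl

open Polynomial in
private lemma derivative_physHermite (n : ℕ) :
    Polynomial.derivative (physHermite (n + 1))
      = (2 * (n + 1) : ℤ) • physHermite n := by
  induction n with
  | zero =>
    rw [physHermite_succ, physHermite_zero]
    simp
  | succ n ih =>
    rw [physHermite_succ (n+1), derivative_sub, derivative_mul, derivative_mul, ih]
    simp only [derivative_ofNat, derivative_X, mul_one, derivative_smul, ih]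
    rw [physHermite_succ n]
    push_cast
    ring_nf

private lemma conj_aeval (z : ℂ) (p : Polynomial ℤ) :
    (starRingEnd ℂ) (Polynomial.aeval z p)
      = Polynomial.aeval ((starRingEnd ℂ) z) p := by
  rw [Polynomial.aeval_def, Polynomial.aeval_def, Polynomial.hom_eval₂]
  congr 1
  exact Subsingleton.elim _ _

private lemma aeval_physHermite_succ (z : ℂ) (n : ℕ) :
    Polynomial.aeval z (physHermite (n + 1))
      = 2 * z * Polynomial.aeval z (physHermite n)
        - Polynomial.aeval z (Polynomial.derivative (physHermite n)) := by
  rw [physHermite_succ, map_sub, map_mul, map_mul, map_ofNat, Polynomial.aeval_X]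

private lemma hasDerivAt_aeval_mul (p : Polynomial ℤ) (c : ℂ) (x : ℝ) :
    HasDerivAt (fun x : ℝ => Polynomial.aeval (c * (x : ℂ)) p)
      (c * Polynomial.aeval (c * (x : ℂ)) (Polynomial.derivative p)) x := by
  have h1 : HasDerivAt (fun z : ℂ => Polynomial.aeval (c * z) p)
      (c * Polynomial.aeval (c * (x : ℂ)) (Polynomial.derivative p)) (x : ℂ) := by
    have hq := Polynomial.hasDerivAt (p.map (algebraMap ℤ ℂ)) (c * (x : ℂ))
    have hin : HasDerivAt (fun z : ℂ => c * z) c (x : ℂ) := by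
      simpa using (hasDerivAt_id (x : ℂ)).const_mul c
    have := hq.comp (x : ℂ) hin
    have hf : (fun z : ℂ => Polynomial.aeval (c * z) p)
        = (fun x => Polynomial.eval x (Polynomial.map (algebraMap ℤ ℂ) p)) ∘ HMul.hMul c := by
      ext z
      show Polynomial.aeval (c * z) p = _
      rw [Polynomial.aeval_def, Polynomial.eval₂_eq_eval_map]
      rfl
    rw [hf]
    refine this.congr_deriv ?_
    · rw [Polynomial.aeval_def, Polynomial.eval₂_eq_eval_map, Polynomial.derivative_map]
      ring
  exact h1.comp_ofReal

private lemma hasDerivAt_gauss (b : ℂ) (x : ℝ) :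
    HasDerivAt (fun x : ℝ => Complex.exp (-b * (x : ℂ) ^ 2))
      (-b * 2 * x * Complex.exp (-b * (x : ℂ) ^ 2)) x := by
  have h1 : HasDerivAt (fun z : ℂ => Complex.exp (-b * z ^ 2))
      (-b * 2 * x * Complex.exp (-b * (x : ℂ) ^ 2)) (x : ℂ) := by
    have hin : HasDerivAt (fun z : ℂ => -b * z ^ 2) (-b * (2 * (x : ℂ))) (x : ℂ) := by
      simpa using ((hasDerivAt_pow 2 (x : ℂ)).const_mul (-b))
    have := (Complex.hasDerivAt_exp (-b * (x : ℂ) ^ 2)).comp (x : ℂ) hin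
    refine this.congr_deriv ?_
    ring
  exact h1.comp_ofReal

private lemma integrable_pow_gauss {b : ℂ} (hb : 0 < b.re) (k : ℕ) :
    Integrable fun x : ℝ => (x : ℂ) ^ k * Complex.exp (-b * (x : ℂ) ^ 2) := by
  have h1 : Integrable fun x : ℝ => x ^ (2 * k) * Real.exp (-b.re * x ^ 2) := by
    have := integrable_rpow_mul_exp_neg_mul_sq hb (s := ((2 * k : ℕ) : ℝ))
      (lt_of_lt_of_le (by norm_num) (Nat.cast_nonneg _))
    rw [show ((2 * k : ℕ) : ℝ) = ((2 * k : ℕ) : ℝ) from rfl] at this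
    simp only [Real.rpow_natCast] at this
    exact this
  have h2 : Integrable fun x : ℝ => Real.exp (-b.re * x ^ 2) :=
    integrable_exp_neg_mul_sq hb
  have hg : Integrable fun x : ℝ => (x ^ (2 * k) + 1) * Real.exp (-b.re * x ^ 2) := by
    simpa [add_mul] using (h1.add h2 : Integrable (fun x : ℝ => x ^ (2 * k) * Real.exp (-b.re * x ^ 2) + Real.exp (-b.re * x ^ 2)))
  refine hg.mono' ?_ ?_
  · apply Continuous.aestronglyMeasurable
    fun_prop
  · filter_upwards with x
    rw [norm_mul]
    have hexp : ‖Complex.exp (-b * (x : ℂ) ^ 2)‖ = Real.exp (-b.re * x ^ 2) := by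
      rw [Complex.norm_exp]
      congr 1
      simp [← Complex.ofReal_pow]
    have hpow : ‖(x : ℂ) ^ k‖ = |x| ^ k := by
      simp
    rw [hexp, hpow]
    have hb1 : |x| ^ k ≤ x ^ (2 * k) + 1 := by
      rcases le_or_gt (|x|) 1 with h | h
      · have hk := pow_le_one₀ (abs_nonneg x) h (n := k)
        have h0 : (0:ℝ) ≤ x ^ (2 * k) := by rw [pow_mul]; positivity
        linarith
      · have h1 : |x| ^ k ≤ |x| ^ (2 * k) := by
          apply pow_le_pow_right₀ h.le
          omega
        have h2 : |x| ^ (2 * k) = x ^ (2 * k) := by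
          rw [pow_mul, _root_.sq_abs, ← pow_mul]
        nlinarith
    have : (0:ℝ) < Real.exp (-b.re * x ^ 2) := Real.exp_pos _
    nlinarith [abs_nonneg x, pow_nonneg (abs_nonneg x) k]

private lemma integrable_aeval_gauss {b : ℂ} (hb : 0 < b.re) (c : ℂ) (p : Polynomial ℤ) :
    Integrable fun x : ℝ =>
      Polynomial.aeval (c * (x : ℂ)) p * Complex.exp (-b * (x : ℂ) ^ 2) := by
  have heq : (fun x : ℝ => Polynomial.aeval (c * (x : ℂ)) p * Complex.exp (-b * (x : ℂ) ^ 2))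
      = fun x : ℝ => ∑ i ∈ Finset.range (p.natDegree + 1),
          ((p.coeff i : ℂ) * c ^ i) * ((x : ℂ) ^ i * Complex.exp (-b * (x : ℂ) ^ 2)) := by
    funext x
    rw [Polynomial.aeval_eq_sum_range, Finset.sum_mul]
    apply Finset.sum_congr rfl
    intro i _
    rw [zsmul_eq_mul]
    ring
  rw [heq]
  apply integrable_finset_sum
  intro i _
  exact (integrable_pow_gauss hb i).const_mul _

private lemma K_step {c : ℂ} (hc : c ≠ 0) (hb : 0 < (c ^ 2).re) (n m : ℕ) :
    (∫ x : ℝ, Polynomial.aeval (c * (x : ℂ)) (physHermite (n + 1))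
        * Polynomial.aeval (c * (x : ℂ)) (physHermite m)
        * Complex.exp (-(c ^ 2) * (x : ℂ) ^ 2))
    = ∫ x : ℝ, Polynomial.aeval (c * (x : ℂ)) (physHermite n)
        * Polynomial.aeval (c * (x : ℂ)) (Polynomial.derivative (physHermite m))
        * Complex.exp (-(c ^ 2) * (x : ℂ) ^ 2) := by
  set u : ℝ → ℂ := fun x => Polynomial.aeval (c * (x:ℂ)) (physHermite n)
      * Complex.exp (-(c ^ 2) * (x:ℂ)^2) with hu
  set v : ℝ → ℂ := fun x => Polynomial.aeval (c * (x:ℂ)) (physHermite m) with hv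
  set u' : ℝ → ℂ := fun x => -c * (Polynomial.aeval (c * (x:ℂ)) (physHermite (n+1))
      * Complex.exp (-(c ^ 2) * (x:ℂ)^2)) with hu'
  set v' : ℝ → ℂ := fun x =>
      c * Polynomial.aeval (c * (x:ℂ)) (Polynomial.derivative (physHermite m)) with hv'
  have hud : ∀ x : ℝ, HasDerivAt u (u' x) x := by
    intro x
    have h1 := hasDerivAt_aeval_mul (physHermite n) c x
    have h2 := hasDerivAt_gauss (c ^ 2) x
    have h3 := h1.mul h2
    refine HasDerivAt.congr_deriv h3 (Eq.symm ?_)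
    show -c * ((Polynomial.aeval (c * ↑x)) (physHermite (n + 1)) * cexp (-c ^ 2 * ↑x ^ 2)) = _
    rw [aeval_physHermite_succ]
    ring
  have hvd : ∀ x : ℝ, HasDerivAt v (v' x) x := fun x => hasDerivAt_aeval_mul _ c x
  have hint1 : Integrable (u * v') := by
    refine ((integrable_aeval_gauss hb c
      (physHermite n * Polynomial.derivative (physHermite m))).const_mul c).congr
      (Eventually.of_forall fun x => ?_)
    simp only [hu, hv', Pi.mul_apply, map_mul]
    ring
  have hint2 : Integrable (u' * v) := by
    refine ((integrable_aeval_gauss hb c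
      (physHermite (n+1) * physHermite m)).const_mul (-c)).congr
      (Eventually.of_forall fun x => ?_)
    simp only [hu', hv, Pi.mul_apply, map_mul]
    ring
  have hint3 : Integrable (u * v) := by
    refine (integrable_aeval_gauss hb c
      (physHermite n * physHermite m)).congr
      (Eventually.of_forall fun x => ?_)
    simp only [hu, hv, Pi.mul_apply, map_mul]
    ring
  have key := integral_mul_deriv_eq_deriv_mul_of_integrable (fun x _ => hud x) (fun x _ => hvd x) hint1 hint2 hint3
  apply mul_left_cancel₀ hc
  rw [← integral_const_mul, ← integral_const_mul]
  have e1 : (∫ x : ℝ, c * (Polynomial.aeval (c * (x : ℂ)) (physHermite (n + 1))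
      * Polynomial.aeval (c * (x : ℂ)) (physHermite m)
      * Complex.exp (-(c ^ 2) * (x : ℂ) ^ 2)))
      = ∫ x : ℝ, -(u' x * v x) := by
    congr 1
    funext x
    simp only [hu', hv]
    ring
  have e2 : (∫ x : ℝ, c * (Polynomial.aeval (c * (x : ℂ)) (physHermite n)
      * Polynomial.aeval (c * (x : ℂ)) (Polynomial.derivative (physHermite m))
      * Complex.exp (-(c ^ 2) * (x : ℂ) ^ 2)))
      = ∫ x : ℝ, u x * v' x := by
    congr 1
    funext x
    simp only [hu, hv']
    ring
  rw [e1, e2, key, integral_neg]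

private lemma K_val {c : ℂ} (hc : c ≠ 0) (hb : 0 < (c ^ 2).re) (n m : ℕ) :
    (∫ x : ℝ, Polynomial.aeval (c * (x : ℂ)) (physHermite n)
        * Polynomial.aeval (c * (x : ℂ)) (physHermite m)
        * Complex.exp (-(c ^ 2) * (x : ℂ) ^ 2))
    = (if n = m then (2 ^ n * n.factorial : ℂ) else 0)
        * ∫ x : ℝ, Complex.exp (-(c ^ 2) * (x : ℂ) ^ 2) := by
  induction n generalizing m with
  | zero =>
    cases m with
    | zero => simp [physHermite_zero]
    | succ m =>
      have hsym : (∫ x : ℝ, Polynomial.aeval (c * (x : ℂ)) (physHermite 0)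
          * Polynomial.aeval (c * (x : ℂ)) (physHermite (m+1))
          * Complex.exp (-(c ^ 2) * (x : ℂ) ^ 2))
          = ∫ x : ℝ, Polynomial.aeval (c * (x : ℂ)) (physHermite (m+1))
          * Polynomial.aeval (c * (x : ℂ)) (physHermite 0)
          * Complex.exp (-(c ^ 2) * (x : ℂ) ^ 2) := by
        congr 1; funext x; ring
      rw [hsym, K_step hc hb m 0]
      simp [physHermite_zero]
  | succ n ih =>
    cases m with
    | zero =>
      rw [K_step hc hb n 0]
      simp [physHermite_zero]
    | succ m =>
      rw [K_step hc hb n (m+1)]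
      have h2 : (∫ x : ℝ, Polynomial.aeval (c * (x : ℂ)) (physHermite n)
          * Polynomial.aeval (c * (x : ℂ)) (Polynomial.derivative (physHermite (m+1)))
          * Complex.exp (-(c ^ 2) * (x : ℂ) ^ 2))
          = (2 * (m + 1) : ℂ) * ∫ x : ℝ, Polynomial.aeval (c * (x : ℂ)) (physHermite n)
          * Polynomial.aeval (c * (x : ℂ)) (physHermite m)
          * Complex.exp (-(c ^ 2) * (x : ℂ) ^ 2) := by
        rw [← integral_const_mul]
        congr 1; funext x
        rw [derivative_physHermite m, map_zsmul]
        rw [zsmul_eq_mul]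
        push_cast
        ring
      rw [h2, ih m]
      by_cases h : n = m
      · subst h
        simp only [if_pos rfl]
        rw [Nat.factorial_succ]
        push_cast
        ring
      · have h' : ¬ (n + 1 = m + 1) := fun h' => h (Nat.succ_injective h')
        simp [h, h']

/-- biorthonormality `⟨φ_n^{(θ)}, ψ_m^{(θ)}⟩ = δ_{n,m}` with
`N^{(θ)} = (Ω/π)^{1/4} e^{iθ/4}` and `ψ_m^{(θ)} = φ_m^{(-θ)}`. -/
theorem stmt6 (Ω θ : ℝ) (hΩ : 0 < Ω) (hθ : |θ| < Real.pi / 2) (n m : ℕ) :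
    (∫ x : ℝ, starRingEnd ℂ
        (phiN Ω θ (((Ω / Real.pi) ^ ((1:ℝ)/4) : ℝ) * Complex.exp (Complex.I * θ / 4)) n x)
      * phiN Ω (-θ) (((Ω / Real.pi) ^ ((1:ℝ)/4) : ℝ) * Complex.exp (Complex.I * (-θ) / 4)) m x)
    = if n = m then 1 else 0 := by
  obtain ⟨hθ1, hθ2⟩ := abs_lt.mp hθ
  have hπ := Real.pi_pos
  set r : ℝ := (Ω / Real.pi) ^ ((1:ℝ)/4) with hr
  set c : ℂ := Complex.exp (-Complex.I * (θ:ℂ) / 2) * (Real.sqrt Ω : ℂ) with hc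
  have hsq : c ^ 2 = (Ω : ℂ) * Complex.exp (-Complex.I * (θ:ℂ)) := by
    rw [hc, mul_pow, ← Complex.ofReal_pow, Real.sq_sqrt hΩ.le, sq, ← Complex.exp_add]
    rw [show -Complex.I * (θ:ℂ) / 2 + -Complex.I * (θ:ℂ) / 2 = -Complex.I * (θ:ℂ) by ring]
    ring
  have hre : 0 < (c ^ 2).re := by
    rw [hsq, show Complex.exp (-Complex.I * (θ:ℂ)) = Complex.exp (((-θ : ℝ) : ℂ) * Complex.I)
      by congr 1; push_cast; ring]
    rw [Complex.re_ofReal_mul, Complex.exp_ofReal_mul_I_re, Real.cos_neg]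
    exact mul_pos hΩ (Real.cos_pos_of_mem_Ioo ⟨by linarith, by linarith⟩)
  have hcne : c ≠ 0 := by
    apply mul_ne_zero (Complex.exp_ne_zero _)
    exact_mod_cast (Real.sqrt_pos.mpr hΩ).ne'
  -- value of the Gaussian integral
  have hGval : (∫ x : ℝ, Complex.exp (-(c ^ 2) * (x : ℂ) ^ 2))
      = ((Real.sqrt (Real.pi / Ω) : ℝ) : ℂ) * Complex.exp (Complex.I * (θ:ℂ) / 2) := by
    rw [integral_gaussian_complex hre]
    have h1 : ((Real.pi : ℂ) / c ^ 2)
        = (((Real.pi / Ω : ℝ)) : ℂ) * Complex.exp (Complex.I * (θ:ℂ)) := by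
      rw [hsq, neg_mul, Complex.exp_neg]
      have hΩ' : (Ω : ℂ) ≠ 0 := by exact_mod_cast hΩ.ne'
      push_cast
      field_simp
    have h2 : (((Real.pi / Ω : ℝ)) : ℂ) * Complex.exp (Complex.I * (θ:ℂ))
        = Complex.exp ((Real.log (Real.pi / Ω) : ℂ) + Complex.I * (θ:ℂ)) := by
      rw [Complex.exp_add, ← Complex.ofReal_exp, Real.exp_log (by positivity)]
    rw [h1, h2, Complex.cpow_def_of_ne_zero (Complex.exp_ne_zero _),
      Complex.log_exp (by simp; linarith) (by simp; linarith)]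
    rw [show ((Real.log (Real.pi / Ω) : ℂ) + Complex.I * (θ:ℂ)) * (1/2 : ℂ)
        = ((Real.log (Real.pi / Ω) / 2 : ℝ) : ℂ) + Complex.I * (θ:ℂ) / 2 by push_cast; ring]
    rw [Complex.exp_add, ← Complex.ofReal_exp]
    congr 2
    rw [Real.sqrt_eq_rpow, Real.rpow_def_of_pos (by positivity)]
    ring_nf
  -- pointwise identity for the integrand
  have hpt : ∀ x : ℝ, starRingEnd ℂ
        (phiN Ω θ ((r : ℂ) * Complex.exp (Complex.I * θ / 4)) n x)
      * phiN Ω (-θ) ((r : ℂ) * Complex.exp (Complex.I * -(θ:ℂ) / 4)) m x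
      = (((r:ℂ) * Complex.exp (-Complex.I * (θ:ℂ) / 4)) ^ 2
          / ((Real.sqrt (2 ^ n * n.factorial) : ℂ) * (Real.sqrt (2 ^ m * m.factorial) : ℂ)))
        * (Polynomial.aeval (c * (x : ℂ)) (physHermite n)
            * Polynomial.aeval (c * (x : ℂ)) (physHermite m)
            * Complex.exp (-(c ^ 2) * (x : ℂ) ^ 2)) := by
    intro x
    have harg4 : Complex.exp (Complex.I * -(θ:ℂ) / 4)
        = Complex.exp (-Complex.I * (θ:ℂ) / 4) := by congr 1; ring
    have harg2 : Complex.exp (Complex.I * ((-θ:ℝ):ℂ) / 2)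
        = Complex.exp (-Complex.I * (θ:ℂ) / 2) := by congr 1; push_cast; ring
    have harg1 : Complex.exp (Complex.I * ((-θ:ℝ):ℂ))
        = Complex.exp (-Complex.I * (θ:ℂ)) := by congr 1; push_cast; ring
    have hexp2 : Complex.exp (-(c ^ 2) * (x:ℂ) ^ 2)
        = Complex.exp (-(1/2) * (Ω:ℂ) * Complex.exp (-Complex.I * (θ:ℂ)) * (x:ℂ) ^ 2)
          * Complex.exp (-(1/2) * (Ω:ℂ) * Complex.exp (-Complex.I * (θ:ℂ)) * (x:ℂ) ^ 2) := by
      rw [← Complex.exp_add, hsq]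
      congr 1
      ring
    rw [hexp2]
    simp only [phiN, map_mul, map_div₀, map_neg, map_one, map_ofNat, Complex.conj_ofReal,
      Complex.conj_I, conj_aeval, ← Complex.exp_conj, map_pow, harg4, harg2, harg1, hexp2, hc]
    ring
  rw [MeasureTheory.integral_congr_ae (Eventually.of_forall hpt)]
  rw [integral_const_mul, K_val hcne hre n m, hGval]
  by_cases h : n = m
  · subst h
    simp only [eq_self_iff_true, if_true]
    have hfac : (0:ℝ) < 2 ^ n * n.factorial := by positivity
    have hs : ((Real.sqrt (2 ^ n * n.factorial) : ℂ) * (Real.sqrt (2 ^ n * n.factorial) : ℂ))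
        = ((2:ℂ) ^ n * n.factorial) := by
      rw [← Complex.ofReal_mul, Real.mul_self_sqrt hfac.le]
      push_cast
      ring
    have hexp4 : ((r:ℂ) * Complex.exp (-Complex.I * (θ:ℂ) / 4)) ^ 2
        = (r:ℂ)^2 * Complex.exp (-Complex.I * (θ:ℂ) / 2) := by
      rw [mul_pow, sq (Complex.exp _), ← Complex.exp_add]
      congr 2
      ring
    have hr2 : (r:ℝ)^2 * Real.sqrt (Real.pi / Ω) = 1 := by
      rw [hr, ← Real.rpow_natCast ((Ω / Real.pi) ^ ((1:ℝ)/4)) 2, ← Real.rpow_mul (by positivity)]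
      rw [Real.sqrt_eq_rpow, show ((1:ℝ)/4 * (2:ℕ)) = (1/2 : ℝ) by push_cast; ring]
      rw [← Real.mul_rpow (by positivity) (by positivity)]
      rw [show Ω / Real.pi * (Real.pi / Ω) = 1 by field_simp]
      simp
    have hee : Complex.exp (-Complex.I * (θ:ℂ) / 2) * Complex.exp (Complex.I * (θ:ℂ) / 2) = 1 := by
      rw [← Complex.exp_add, show -Complex.I * (θ:ℂ) / 2 + Complex.I * (θ:ℂ) / 2 = 0 by ring,
        Complex.exp_zero]
    have h2n : ((2:ℂ) ^ n * n.factorial) ≠ 0 := by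
      have : ((2:ℝ) ^ n * n.factorial) ≠ 0 := hfac.ne'
      exact_mod_cast this
    have hcast : ((r:ℂ)^2 * ((Real.sqrt (Real.pi / Ω) : ℝ) : ℂ)) = 1 := by
      exact_mod_cast congrArg Complex.ofReal hr2
    rw [hs, hexp4, div_mul_eq_mul_div, div_eq_one_iff_eq h2n]
    rw [show (r:ℂ)^2 * Complex.exp (-Complex.I*(θ:ℂ)/2) * ((2:ℂ)^n * (n.factorial:ℂ)
        * (((Real.sqrt (Real.pi/Ω) : ℝ):ℂ) * Complex.exp (Complex.I*(θ:ℂ)/2)))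
        = ((r:ℂ)^2 * ((Real.sqrt (Real.pi/Ω) : ℝ):ℂ))
          * (Complex.exp (-Complex.I*(θ:ℂ)/2) * Complex.exp (Complex.I*(θ:ℂ)/2))
          * ((2:ℂ)^n * (n.factorial:ℂ)) from by ring, hee, hcast]
    ring
  · simp [h]
end
end

section
/- For each fixed n ≥ 0 and every f ∈ 𝒮(ℝ), the inner product ⟨φ_n^{(θ)}, f⟩ converges to ⟨φ_n^{(+)}, f⟩ as θ → π/2 from within (-π/2, π/2); i.e. φ_n^{(+)} is the weak (distributional) limit of φ_n^{(θ)}. -/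
open MeasureTheory Complex Filter

noncomputable section

lemma phi_norm_bound (Ω : ℝ) (hΩ : 0 < Ω) (n : ℕ) (θ : ℝ) (hθ : 0 ≤ Real.cos θ) (x : ℝ) :
    ‖phiN Ω θ (((Ω / Real.pi) ^ ((1:ℝ)/4) : ℝ) * Complex.exp (Complex.I * θ / 4)) n x‖ ≤
      (Ω / Real.pi) ^ ((1:ℝ)/4) / Real.sqrt (2 ^ n * n.factorial) *
        ∑ k ∈ Finset.range ((physHermite n).natDegree + 1),
          |((physHermite n).coeff k : ℝ)| * (Real.sqrt Ω * |x|) ^ k := by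
  have hC : ‖((((Ω / Real.pi) ^ ((1:ℝ)/4) : ℝ) : ℂ) * Complex.exp (Complex.I * θ / 4))
      / (Real.sqrt (2 ^ n * n.factorial) : ℂ)‖
      = (Ω / Real.pi) ^ ((1:ℝ)/4) / Real.sqrt (2 ^ n * n.factorial) := by
    rw [norm_div, norm_mul]
    simp [Complex.norm_exp]
    rw [_root_.abs_of_nonneg (by positivity), _root_.abs_of_nonneg (Real.sqrt_nonneg _),
      _root_.abs_of_nonneg (Real.sqrt_nonneg _)]
  have hz : ‖Complex.exp (Complex.I * θ / 2) * (Real.sqrt Ω : ℂ) * (x:ℂ)‖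
      = Real.sqrt Ω * |x| := by
    simp [Complex.norm_exp, _root_.abs_of_nonneg (Real.sqrt_nonneg Ω)]
  have hP : ‖Polynomial.aeval (Complex.exp (Complex.I * θ / 2) * (Real.sqrt Ω : ℂ) * (x:ℂ))
        (physHermite n)‖ ≤
      ∑ k ∈ Finset.range ((physHermite n).natDegree + 1),
        |((physHermite n).coeff k : ℝ)| * (Real.sqrt Ω * |x|) ^ k := by
    rw [Polynomial.aeval_eq_sum_range]
    refine (norm_sum_le _ _).trans (Finset.sum_le_sum fun k _ => ?_)
    rw [zsmul_eq_mul, norm_mul, norm_pow, hz]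
    simp
  have hE : ‖Complex.exp (-(1/2) * (Ω:ℂ) * Complex.exp (Complex.I * θ) * (x:ℂ) ^ 2)‖ ≤ 1 := by
    rw [Complex.norm_exp, Real.exp_le_one_iff]
    have : (-(1/2) * (Ω:ℂ) * Complex.exp (Complex.I * θ) * (x:ℂ) ^ 2)
        = ((-(1/2) * Ω * x^2 : ℝ) : ℂ) * Complex.exp ((θ:ℂ) * Complex.I) := by
      rw [mul_comm ((θ:ℂ)) Complex.I]; push_cast; ring
    rw [this, Complex.re_ofReal_mul, Complex.exp_ofReal_mul_I_re]
    have : (0:ℝ) ≤ (1/2) * Ω * x^2 * Real.cos θ := by positivity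
    nlinarith
  unfold phiN
  rw [norm_mul, norm_mul, hC]
  calc (Ω / Real.pi) ^ ((1:ℝ)/4) / Real.sqrt (2 ^ n * n.factorial) *
        ‖Polynomial.aeval _ (physHermite n)‖ * ‖Complex.exp _‖
      ≤ (Ω / Real.pi) ^ ((1:ℝ)/4) / Real.sqrt (2 ^ n * n.factorial) *
        (∑ k ∈ Finset.range ((physHermite n).natDegree + 1),
          |((physHermite n).coeff k : ℝ)| * (Real.sqrt Ω * |x|) ^ k) * 1 := by
        gcongr
    _ = _ := mul_one _

lemma phi_cont_x (Ω θ : ℝ) (N : ℂ) (n : ℕ) : Continuous (phiN Ω θ N n) := by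
  unfold phiN
  fun_prop

lemma phi_cont_theta (Ω : ℝ) (n : ℕ) (x : ℝ) :
    Continuous (fun θ : ℝ => phiN Ω θ (((Ω / Real.pi) ^ ((1:ℝ)/4) : ℝ) * Complex.exp (Complex.I * θ / 4)) n x) := by
  unfold phiN
  fun_prop

set_option maxHeartbeats 1000000 in
/-- for every Schwartz `f`, `⟨φ_n^{(θ)}, f⟩ → ⟨φ_n^{(+)}, f⟩` as `θ → π/2` from
within `(-π/2, π/2)`; i.e. `φ_n^{(+)}` is the weak limit of the `φ_n^{(θ)}`. -/
theorem stmt15 (Ω : ℝ) (hΩ : 0 < Ω) (n : ℕ) (f : SchwartzMap ℝ ℂ) :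
    Filter.Tendsto (fun θ : ℝ =>
        ∫ x : ℝ, starRingEnd ℂ
          (phiN Ω θ (((Ω / Real.pi) ^ ((1:ℝ)/4) : ℝ) * Complex.exp (Complex.I * θ / 4)) n x) * f x)
      (nhdsWithin (Real.pi / 2) (Set.Ioo (-(Real.pi / 2)) (Real.pi / 2)))
      (nhds (∫ x : ℝ, starRingEnd ℂ
          (phiN Ω (Real.pi / 2)
            (((Ω / Real.pi) ^ ((1:ℝ)/4) : ℝ) * Complex.exp (Complex.I * (Real.pi / 2) / 4)) n x) * f x)) := by
  apply MeasureTheory.tendsto_integral_filter_of_dominated_convergence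
    (bound := fun x => ∑ k ∈ Finset.range ((physHermite n).natDegree + 1),
      ((Ω / Real.pi) ^ ((1:ℝ)/4) / Real.sqrt (2 ^ n * n.factorial) *
        (|((physHermite n).coeff k : ℝ)| * (Real.sqrt Ω) ^ k)) * (‖x‖ ^ k * ‖f x‖))
  · filter_upwards with θ
    exact (((Complex.continuous_conj).comp (phi_cont_x Ω θ _ n)).mul f.continuous).aestronglyMeasurable
  · filter_upwards [self_mem_nhdsWithin] with θ hθ
    refine ae_of_all _ fun x => ?_
    have hcos : 0 ≤ Real.cos θ :=
      Real.cos_nonneg_of_mem_Icc ⟨le_of_lt hθ.1, le_of_lt hθ.2⟩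
    rw [norm_mul, RCLike.norm_conj]
    calc ‖phiN Ω θ _ n x‖ * ‖f x‖
        ≤ ((Ω / Real.pi) ^ ((1:ℝ)/4) / Real.sqrt (2 ^ n * n.factorial) *
            ∑ k ∈ Finset.range ((physHermite n).natDegree + 1),
              |((physHermite n).coeff k : ℝ)| * (Real.sqrt Ω * |x|) ^ k) * ‖f x‖ := by
          gcongr
          exact phi_norm_bound Ω hΩ n θ hcos x
      _ = _ := by
          rw [Finset.mul_sum, Finset.sum_mul]
          refine Finset.sum_congr rfl fun k _ => ?_
          rw [Real.norm_eq_abs, mul_pow]; ring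
  · refine integrable_finset_sum _ fun k _ => ?_
    exact (f.integrable_pow_mul volume k).const_mul _
  · refine ae_of_all _ fun x => ?_
    rw [show ((Real.pi : ℂ) / 2) = ((Real.pi / 2 : ℝ) : ℂ) by push_cast; ring]
    have hc : Continuous (fun θ : ℝ => starRingEnd ℂ
        (phiN Ω θ (((Ω / Real.pi) ^ ((1:ℝ)/4) : ℝ) * Complex.exp (Complex.I * θ / 4)) n x) * f x) :=
      ((Complex.continuous_conj).comp (phi_cont_theta Ω n x)).mul continuous_const
    exact (hc.tendsto (Real.pi / 2)).mono_left nhdsWithin_le_nhds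
end
end
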